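/- arXiv:2102.08916 — 2 statements merged into one kernel-verified Lean document; each statement's English description precedes it below -/
import Mathlib

section
/- Under the Lax condition M > M1 (so that M² - M1² > 0), the quantity M²σ² - ℓ₀²β² is strictly positive, where σ² = M*²(1+M2²) - ℓ₀², β² = M*² - M², M*² = 1 + F11² + F12², M1² = F11² + F12², M2² = F21² + F22², ℓ₀ = F11·F21 + F12·F22. In fact M²σ² - ℓ₀²β² = M*²(M2²(M² - M1²) + M² + (det F)²) where det F = F11·F22 - F12·F21. -/
/-- Under the Lax condition M1 < M < M*, we have
M²σ² - ℓ₀²β² = M*²(M2²(M² - M1²) + M² + (det F)²) > 0. -/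
theorem stmt0 (F11 F12 F21 F22 M : ℝ) (hM : 0 < M)
    (hLax1 : Real.sqrt (F11^2 + F12^2) < M)
    (hLax2 : M < Real.sqrt (1 + F11^2 + F12^2)) :
    M^2 * ((1 + F11^2 + F12^2) + (F21^2 + F22^2) + (F11*F22 - F12*F21)^2)
      - (F11*F21 + F12*F22)^2 * ((1 + F11^2 + F12^2) - M^2)
    = (1 + F11^2 + F12^2) *
        ((F21^2 + F22^2) * (M^2 - (F11^2 + F12^2)) + M^2 + (F11*F22 - F12*F21)^2)
    ∧ 0 < M^2 * ((1 + F11^2 + F12^2) + (F21^2 + F22^2) + (F11*F22 - F12*F21)^2)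
      - (F11*F21 + F12*F22)^2 * ((1 + F11^2 + F12^2) - M^2) := by
  have h1 : F11^2 + F12^2 < M^2 := by
    have := Real.sqrt_lt_sqrt (by positivity) hLax1
    calc F11^2 + F12^2 = Real.sqrt (F11^2+F12^2) ^ 2 := by
          rw [Real.sq_sqrt (by positivity)]
      _ < M^2 := by nlinarith [Real.sqrt_nonneg (F11^2+F12^2)]
  constructor
  · ring
  · nlinarith [sq_nonneg (F11*F22 - F12*F21), sq_nonneg F21, sq_nonneg F22, sq_nonneg F11, sq_nonneg F12, mul_pos hM hM]
end

section
/- Assume the Lax conditions M1 < M < M* and R, σ, β, ℓ₀ as given. Then the uniform stability condition (1+M1²+M²)(1+(F:F)+(det F)²) - (R(M²-M1²)+M2²)(1+M1²)² + ℓ₀²(2(1+M1²)-M²) > 2M|ℓ₀|√((1+M1²-M²)(1+(F:F)+(det F)²)) is equivalent to K < K1 + K2, where K = R(M²-M1²)+M2², K1 = (Mσ - |ℓ₀|β)²/M*⁴, K2 = 1+M2², (F:F) = F11²+F12²+F21²+F22². -/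
/-- The uniform stability condition (usc') is equivalent to K < K1 + K2. -/
theorem stmt2 (F11 F12 F21 F22 M R : ℝ) (hR : 0 < R) (hM : 0 < M)
    (hLax1 : Real.sqrt (F11^2 + F12^2) < M)
    (hLax2 : M < Real.sqrt (1 + F11^2 + F12^2)) :
    ((1 + (F11^2 + F12^2) + M^2) * (1 + (F11^2 + F12^2 + F21^2 + F22^2) + (F11*F22 - F12*F21)^2)
      - (R * (M^2 - (F11^2 + F12^2)) + (F21^2 + F22^2)) * (1 + F11^2 + F12^2)^2
      + (F11*F21 + F12*F22)^2 * (2 * (1 + F11^2 + F12^2) - M^2)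
      > 2 * M * |F11*F21 + F12*F22| *
          Real.sqrt ((1 + F11^2 + F12^2 - M^2) *
            (1 + (F11^2 + F12^2 + F21^2 + F22^2) + (F11*F22 - F12*F21)^2)))
    ↔ R * (M^2 - (F11^2 + F12^2)) + (F21^2 + F22^2)
        < (M * Real.sqrt ((1 + F11^2 + F12^2) + (F21^2 + F22^2) + (F11*F22 - F12*F21)^2)
            - |F11*F21 + F12*F22| * Real.sqrt ((1 + F11^2 + F12^2) - M^2))^2
            / (1 + F11^2 + F12^2)^2
          + (1 + (F21^2 + F22^2)) := by
  have h1 : F11^2 + F12^2 < M^2 := by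
    nlinarith [Real.sq_sqrt (show (0:ℝ) ≤ F11^2 + F12^2 by positivity),
      Real.sqrt_nonneg (F11^2 + F12^2), hLax1, hM]
  have h2 : M^2 < 1 + F11^2 + F12^2 := by
    nlinarith [Real.sq_sqrt (show (0:ℝ) ≤ 1 + F11^2 + F12^2 by positivity),
      Real.sqrt_nonneg (1 + F11^2 + F12^2), hLax2, hM]
  have hbeta : (0:ℝ) ≤ 1 + F11^2 + F12^2 - M^2 := by linarith
  rw [show (1 + F11^2 + F12^2) + (F21^2 + F22^2) + (F11*F22 - F12*F21)^2
      = 1 + (F11^2 + F12^2 + F21^2 + F22^2) + (F11*F22 - F12*F21)^2 from by ring]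
  rw [Real.sqrt_mul hbeta]
  set s := Real.sqrt (1 + (F11^2 + F12^2 + F21^2 + F22^2) + (F11*F22 - F12*F21)^2) with hsdef
  set b := Real.sqrt (1 + F11^2 + F12^2 - M^2) with hbdef
  have hs2 : s^2 = 1 + (F11^2 + F12^2 + F21^2 + F22^2) + (F11*F22 - F12*F21)^2 :=
    Real.sq_sqrt (by positivity)
  have hb2 : b^2 = 1 + F11^2 + F12^2 - M^2 := Real.sq_sqrt hbeta
  have hLsq : |F11*F21 + F12*F22|^2 = (F11*F21 + F12*F22)^2 := sq_abs _
  have key : ((1 + (F11^2 + F12^2) + M^2) * (1 + (F11^2 + F12^2 + F21^2 + F22^2) + (F11*F22 - F12*F21)^2)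
      - (R * (M^2 - (F11^2 + F12^2)) + (F21^2 + F22^2)) * (1 + F11^2 + F12^2)^2
      + (F11*F21 + F12*F22)^2 * (2 * (1 + F11^2 + F12^2) - M^2))
      - 2 * M * |F11*F21 + F12*F22| * (b * s)
      = (M * s - |F11*F21 + F12*F22| * b)^2
        - ((R * (M^2 - (F11^2 + F12^2)) + (F21^2 + F22^2)) - (1 + (F21^2 + F22^2)))
            * (1 + F11^2 + F12^2)^2 := by
    linear_combination (-M^2) * hs2 + (-(|F11*F21 + F12*F22|^2)) * hb2
      + (-(1 + F11^2 + F12^2 - M^2)) * hLsq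
  have hden : (0:ℝ) < (1 + F11^2 + F12^2)^2 := by positivity
  rw [← sub_lt_iff_lt_add, lt_div_iff₀ hden]
  constructor <;> intro h <;> linarith [key]
end
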